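/- arXiv:1805.06769 — 2 statements merged into one kernel-verified Lean document; each statement's English description precedes it below -/
import Mathlib

section
/- Let μ₁, μ₂² ≥ 0 satisfy δ := (μ₁−1)² − 4μ₂² ≥ 0 and define λ(t) := (1+t)^{(μ₁+1)/2} K_{√δ/2}(1+t) for t ≥ 0. Then λ is twice differentiable on (0,∞) and satisfies (1+t)² λ''(t) − μ₁(1+t) λ'(t) + (μ₁ + μ₂² − (1+t)²) λ(t) = 0 for all t > 0; moreover λ(0) = K_{√δ/2}(1) and λ(t) → 0 as t → ∞. -/
open MeasureTheory Real Set Filter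

noncomputable section

/-- Modified Bessel function of the second kind:
`K_ν(t) = ∫₀^∞ exp(−t cosh z) cosh(νz) dz`. -/
def besselK (ν t : ℝ) : ℝ :=
  ∫ z in Set.Ioi (0:ℝ), Real.exp (-t * Real.cosh z) * Real.cosh (ν * z)

/-- `λ(t) = (1+t)^{(μ₁+1)/2} K_{√δ/2}(1+t)`. -/
def lamK (μ₁ δ t : ℝ) : ℝ := (1 + t) ^ ((μ₁ + 1) / 2) * besselK (Real.sqrt δ / 2) (1 + t)

/-!
Differentiating under the integral sign gives
`K_ν⁽ᵏ⁾(t) = ∫₀^∞ (-cosh z)ᵏ e^{-t cosh z} cosh(νz) dz`, and the integrand of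
`t² K_ν'' + t K_ν' - (t² + ν²) K_ν` is the `z`-derivative of
`-e^{-t cosh z} (ν sinh(νz) + t sinh z cosh(νz))`, which vanishes at `z = 0` and at infinity;
so `K_ν` solves the modified Bessel equation. For `h(s) = sᵃ g(s)` that equation becomes
`s² h'' - (2a-1) s h' + (a² - ν² - s²) h = 0`; with `s = 1 + t`, `a = (μ₁+1)/2` and
`ν² = δ/4` this is the stated equation. Decay follows from `K_ν(s) ≤ e^{1-s} K_ν(1)`
for `s ≥ 1`, since `cosh ≥ 1`.
-/

open Topology

lemma cosh_le_exp_abs (x : ℝ) : cosh x ≤ exp |x| := by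
  rw [← cosh_abs, cosh_eq]
  linarith [exp_le_exp.2 (neg_le_self (abs_nonneg x))]

lemma abs_sinh_le_exp_abs (x : ℝ) : |sinh x| ≤ exp |x| := by
  rw [abs_sinh]
  simpa using (sinh_lt_cosh |x|).le.trans (cosh_le_exp_abs |x|)

lemma mul_sub_mul_cosh_le (a : ℝ) {t z : ℝ} (ht : 0 < t) (hz : 0 ≤ z) :
    a * z - t * cosh z ≤ (a + 1) ^ 2 / t - z := by
  have hcosh : z ^ 2 / 4 ≤ cosh z := by
    rw [cosh_eq]
    nlinarith [quadratic_le_exp_of_nonneg hz, exp_pos (-z)]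
  rw [le_sub_iff_add_le, le_div_iff₀ ht]
  nlinarith [sq_nonneg (t * z / 2 - (a + 1)), mul_le_mul_of_nonneg_left hcosh (sq_nonneg t)]

lemma integrableOn_exp_mul_sub_mul_cosh (a : ℝ) {t : ℝ} (ht : 0 < t) :
    IntegrableOn (fun z => exp (a * z - t * cosh z)) (Ioi 0) := by
  refine ((exp_neg_integrableOn_Ioi 0 one_pos).const_mul (exp ((a + 1) ^ 2 / t))).mono'
    (by fun_prop) ((ae_restrict_iff' measurableSet_Ioi).2 (ae_of_all _ fun z hz => ?_))
  rw [norm_of_nonneg (exp_pos _).le, ← exp_add]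
  exact exp_le_exp.2 (by linarith [mul_sub_mul_cosh_le a ht (le_of_lt hz)])

lemma tendsto_exp_mul_sub_mul_cosh (a : ℝ) {t : ℝ} (ht : 0 < t) :
    Tendsto (fun z => exp (a * z - t * cosh z)) atTop (𝓝 0) := by
  refine squeeze_zero' (Eventually.of_forall fun z => (exp_pos _).le) ?_
    (tendsto_exp_atBot.comp
      (tendsto_atBot_add_const_left _ ((a + 1) ^ 2 / t) tendsto_neg_atTop_atBot))
  filter_upwards [eventually_ge_atTop 0] with z hz
  exact exp_le_exp.2 (mul_sub_mul_cosh_le a ht hz)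

def besselKIntegrand (k : ℕ) (ν t z : ℝ) : ℝ :=
  (-cosh z) ^ k * (exp (-t * cosh z) * cosh (ν * z))

def besselKDeriv (k : ℕ) (ν t : ℝ) : ℝ :=
  ∫ z in Ioi (0:ℝ), besselKIntegrand k ν t z

lemma besselKDeriv_zero (ν : ℝ) : besselKDeriv 0 ν = besselK ν := by
  ext t
  simp [besselKDeriv, besselKIntegrand, besselK]

lemma continuous_besselKIntegrand (k : ℕ) (ν t : ℝ) :
    Continuous (besselKIntegrand k ν t) := by
  unfold besselKIntegrand
  fun_prop

lemma norm_besselKIntegrand_le (k : ℕ) (ν : ℝ) {c t z : ℝ} (hct : c ≤ t) (hz : 0 ≤ z) :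
    ‖besselKIntegrand k ν t z‖ ≤ exp ((k + |ν|) * z - c * cosh z) := by
  have hcosh : cosh z ^ k ≤ exp (k * z) := by
    rw [exp_nat_mul]
    exact pow_le_pow_left₀ (cosh_pos z).le
      ((cosh_le_exp_abs z).trans_eq (by rw [abs_of_nonneg hz])) k
  have hexp : exp (-t * cosh z) ≤ exp (-c * cosh z) :=
    exp_le_exp.2 (by nlinarith [cosh_pos z])
  have hν : cosh (ν * z) ≤ exp (|ν| * z) :=
    (cosh_le_exp_abs _).trans_eq (by rw [abs_mul, abs_of_nonneg hz])
  rw [besselKIntegrand, norm_mul, norm_pow, norm_neg, norm_of_nonneg (cosh_pos z).le,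
    norm_of_nonneg (by positivity)]
  calc cosh z ^ k * (exp (-t * cosh z) * cosh (ν * z))
      ≤ exp (k * z) * (exp (-c * cosh z) * exp (|ν| * z)) := by gcongr
    _ = exp ((k + |ν|) * z - c * cosh z) := by rw [← exp_add, ← exp_add]; ring_nf

lemma integrableOn_besselKIntegrand (k : ℕ) (ν : ℝ) {t : ℝ} (ht : 0 < t) :
    IntegrableOn (besselKIntegrand k ν t) (Ioi 0) :=
  (integrableOn_exp_mul_sub_mul_cosh (k + |ν|) ht).mono'
    (continuous_besselKIntegrand k ν t).aestronglyMeasurable.restrict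
    ((ae_restrict_iff' measurableSet_Ioi).2
      (ae_of_all _ fun _ hz => norm_besselKIntegrand_le k ν le_rfl (le_of_lt hz)))

lemma hasDerivAt_besselKIntegrand (k : ℕ) (ν t z : ℝ) :
    HasDerivAt (fun t => besselKIntegrand k ν t z) (besselKIntegrand (k + 1) ν t z) t := by
  have := (((hasDerivAt_neg t).mul_const (cosh z)).exp.mul_const (cosh (ν * z))).const_mul
    ((-cosh z) ^ k)
  simp only [besselKIntegrand]
  exact this.congr_deriv (by ring)

/-- Differentiation under the integral sign, dominated on `(t/2, 3t/2)`. -/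
lemma hasDerivAt_besselKDeriv (k : ℕ) (ν : ℝ) {t : ℝ} (ht : 0 < t) :
    HasDerivAt (besselKDeriv k ν) (besselKDeriv (k + 1) ν t) t := by
  have ht2 : 0 < t / 2 := half_pos ht
  refine (hasDerivAt_integral_of_dominated_loc_of_deriv_le (Metric.ball_mem_nhds t ht2)
    (Eventually.of_forall fun s =>
      (continuous_besselKIntegrand k ν s).aestronglyMeasurable.restrict)
    (integrableOn_besselKIntegrand k ν ht)
    (continuous_besselKIntegrand (k + 1) ν t).aestronglyMeasurable.restrict
    ((ae_restrict_iff' measurableSet_Ioi).2 (ae_of_all _ fun z hz s hs => ?_))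
    (integrableOn_exp_mul_sub_mul_cosh ((k + 1 : ℕ) + |ν|) ht2)
    (ae_of_all _ fun z s _ => hasDerivAt_besselKIntegrand k ν s z)).2
  rw [Metric.mem_ball, Real.dist_eq, abs_lt] at hs
  exact norm_besselKIntegrand_le (k + 1) ν (by linarith) (le_of_lt hz)

lemma hasDerivAt_besselK (ν : ℝ) {t : ℝ} (ht : 0 < t) :
    HasDerivAt (besselK ν) (besselKDeriv 1 ν t) t :=
  besselKDeriv_zero ν ▸ hasDerivAt_besselKDeriv 0 ν ht

/-- The antiderivative in `z` that integrates Bessel's equation for `besselK`. -/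
def besselKBoundary (ν t z : ℝ) : ℝ :=
  -(exp (-t * cosh z) * (ν * sinh (ν * z) + t * sinh z * cosh (ν * z)))

lemma hasDerivAt_besselKBoundary (ν t z : ℝ) :
    HasDerivAt (besselKBoundary ν t)
      (t ^ 2 * besselKIntegrand 2 ν t z + t * besselKIntegrand 1 ν t z
        - (t ^ 2 + ν ^ 2) * besselKIntegrand 0 ν t z) z := by
  have hνz : HasDerivAt (fun z => ν * z) ν z := by simpa using (hasDerivAt_id z).const_mul ν
  have := (((hasDerivAt_cosh z).const_mul (-t)).exp.mul
    ((((hasDerivAt_sinh _).comp z hνz).const_mul ν).add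
      (((hasDerivAt_sinh z).const_mul t).mul ((hasDerivAt_cosh _).comp z hνz)))).neg
  unfold besselKBoundary
  refine this.congr_deriv ?_
  simp only [besselKIntegrand, Function.comp_apply, Pi.add_apply, Pi.mul_apply]
  linear_combination (t ^ 2 * exp (-t * cosh z) * cosh (ν * z)) * sinh_sq z

lemma tendsto_besselKBoundary (ν : ℝ) {t : ℝ} (ht : 0 < t) :
    Tendsto (besselKBoundary ν t) atTop (𝓝 0) := by
  have hlim : Tendsto (fun z => (|ν| + t) * exp ((1 + |ν|) * z - t * cosh z)) atTop (𝓝 0) := by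
    simpa using (tendsto_exp_mul_sub_mul_cosh (1 + |ν|) ht).const_mul (|ν| + t)
  refine squeeze_zero_norm' ?_ hlim
  filter_upwards [eventually_ge_atTop 0] with z hz
  have hsinhν : |sinh (ν * z)| ≤ exp ((1 + |ν|) * z) :=
    (abs_sinh_le_exp_abs _).trans (exp_le_exp.2 (by rw [abs_mul, abs_of_nonneg hz]; nlinarith))
  have hsinh : |sinh z| * cosh (ν * z) ≤ exp ((1 + |ν|) * z) :=
    calc _ ≤ exp |z| * exp |ν * z| := by
          gcongr
          · exact abs_sinh_le_exp_abs z
          · exact cosh_le_exp_abs _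
      _ = exp ((1 + |ν|) * z) := by rw [← exp_add, abs_mul, abs_of_nonneg hz]; ring_nf
  have hS :
      |ν * sinh (ν * z) + t * sinh z * cosh (ν * z)| ≤ (|ν| + t) * exp ((1 + |ν|) * z) :=
    calc _ ≤ |ν| * |sinh (ν * z)| + t * (|sinh z| * cosh (ν * z)) := by
          refine (abs_add_le _ _).trans_eq ?_
          rw [abs_mul, abs_mul, abs_mul, abs_of_pos ht, abs_of_pos (cosh_pos _)]
          ring
      _ ≤ _ := by rw [add_mul]; gcongr
  rw [besselKBoundary, norm_neg, norm_mul, norm_of_nonneg (exp_pos _).le, Real.norm_eq_abs]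
  calc _ ≤ exp (-t * cosh z) * ((|ν| + t) * exp ((1 + |ν|) * z)) := by gcongr
    _ = _ := by rw [mul_left_comm, ← exp_add]; ring_nf

theorem besselK_ode (ν : ℝ) {t : ℝ} (ht : 0 < t) :
    t ^ 2 * besselKDeriv 2 ν t + t * besselKDeriv 1 ν t
      - (t ^ 2 + ν ^ 2) * besselK ν t = 0 := by
  have hint k := integrableOn_besselKIntegrand k ν ht
  have hFTC := integral_Ioi_of_hasDerivAt_of_tendsto'
    (fun z _ => hasDerivAt_besselKBoundary ν t z)
    (((hint 2).const_mul _).add ((hint 1).const_mul _) |>.sub ((hint 0).const_mul _))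
    (tendsto_besselKBoundary ν ht)
  rw [integral_sub ?_ ((hint 0).const_mul _),
    integral_add ((hint 2).const_mul _) ((hint 1).const_mul _),
    integral_const_mul, integral_const_mul, integral_const_mul] at hFTC
  · rw [← besselKDeriv_zero]
    simpa [besselKBoundary, besselKDeriv] using hFTC
  · exact ((hint 2).const_mul _).add ((hint 1).const_mul _)

lemma besselK_nonneg (ν t : ℝ) : 0 ≤ besselK ν t :=
  setIntegral_nonneg measurableSet_Ioi fun z _ => by positivity

lemma besselK_le_exp_sub_mul (ν : ℝ) {c s : ℝ} (hc : 0 < c) (hcs : c ≤ s) :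
    besselK ν s ≤ exp (c - s) * besselK ν c := by
  rw [← besselKDeriv_zero, besselKDeriv, besselKDeriv, ← integral_const_mul]
  refine setIntegral_mono_on (integrableOn_besselKIntegrand 0 ν (hc.trans_le hcs))
    ((integrableOn_besselKIntegrand 0 ν hc).const_mul _) measurableSet_Ioi fun z _ => ?_
  simp only [besselKIntegrand, pow_zero, one_mul]
  rw [← mul_assoc, ← exp_add]
  gcongr
  nlinarith [one_le_cosh z]

lemma tendsto_rpow_mul_besselK_atTop (ν a : ℝ) :
    Tendsto (fun s => s ^ a * besselK ν s) atTop (𝓝 0) := by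
  have hlim : Tendsto (fun s => exp 1 * besselK ν 1 * (s ^ a * exp (-1 * s))) atTop (𝓝 0) := by
    simpa using (tendsto_rpow_mul_exp_neg_mul_atTop_nhds_zero a 1 one_pos).const_mul
      (exp 1 * besselK ν 1)
  refine squeeze_zero' ?_ ?_ hlim
  · filter_upwards [eventually_ge_atTop 0] with s hs
    exact mul_nonneg (rpow_nonneg hs a) (besselK_nonneg ν s)
  · filter_upwards [eventually_ge_atTop 1] with s hs
    calc s ^ a * besselK ν s ≤ s ^ a * (exp (1 - s) * besselK ν 1) :=
          mul_le_mul_of_nonneg_left (besselK_le_exp_sub_mul ν one_pos hs)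
            (rpow_nonneg (zero_le_one.trans hs) a)
      _ = _ := by rw [sub_eq_add_neg, exp_add]; ring_nf

lemma hasDerivAt_rpow_mul {a s g' : ℝ} {g : ℝ → ℝ} (hs : 0 < s) (hg : HasDerivAt g g' s) :
    HasDerivAt (fun s => s ^ a * g s) (a * s ^ (a - 1) * g s + s ^ a * g') s :=
  (hasDerivAt_rpow_const (Or.inl hs.ne')).mul hg

section RpowMul

variable {a : ℝ} {g g' g'' : ℝ → ℝ}

lemma deriv_rpow_mul_eventuallyEq (hg : ∀ s, 0 < s → HasDerivAt g (g' s) s) {s : ℝ}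
    (hs : 0 < s) :
    deriv (fun s => s ^ a * g s) =ᶠ[𝓝 s] fun s => a * s ^ (a - 1) * g s + s ^ a * g' s := by
  filter_upwards [Ioi_mem_nhds hs] with r hr
  exact (hasDerivAt_rpow_mul hr (hg r hr)).deriv

lemma hasDerivAt_deriv_rpow_mul (hg : ∀ s, 0 < s → HasDerivAt g (g' s) s)
    (hg' : ∀ s, 0 < s → HasDerivAt g' (g'' s) s) {s : ℝ} (hs : 0 < s) :
    HasDerivAt (deriv fun s => s ^ a * g s)
      (a * ((a - 1) * s ^ (a - 1 - 1) * g s + s ^ (a - 1) * g' s)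
        + (a * s ^ (a - 1) * g' s + s ^ a * g'' s)) s := by
  refine HasDerivAt.congr_of_eventuallyEq ?_ (deriv_rpow_mul_eventuallyEq hg hs)
  have := ((hasDerivAt_rpow_mul (a := a - 1) hs (hg s hs)).const_mul a).add
    (hasDerivAt_rpow_mul (a := a) hs (hg' s hs))
  convert this using 1
  ext r
  simp only [Pi.add_apply]
  ring

theorem rpow_mul_ode_of_bessel_ode {ν s : ℝ} (hg : ∀ s, 0 < s → HasDerivAt g (g' s) s)
    (hg' : ∀ s, 0 < s → HasDerivAt g' (g'' s) s)
    (hbessel : ∀ s, 0 < s → s ^ 2 * g'' s + s * g' s - (s ^ 2 + ν ^ 2) * g s = 0)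
    (hs : 0 < s) :
    s ^ 2 * deriv (deriv fun s => s ^ a * g s) s
      - (2 * a - 1) * s * deriv (fun s => s ^ a * g s) s
      + (a ^ 2 - ν ^ 2 - s ^ 2) * (s ^ a * g s) = 0 := by
  rw [(hasDerivAt_deriv_rpow_mul hg hg' hs).deriv, (hasDerivAt_rpow_mul hs (hg s hs)).deriv,
    rpow_sub_one hs.ne', rpow_sub_one hs.ne']
  field_simp
  linear_combination s ^ a * hbessel s hs

end RpowMul

theorem lamK_ode_general
    (μ₁ μ₂sq : ℝ)
    (δ : ℝ) (hδdef : δ = (μ₁ - 1) ^ 2 - 4 * μ₂sq) (hδ : 0 ≤ δ) :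
    (∀ t : ℝ, 0 < t →
      DifferentiableAt ℝ (lamK μ₁ δ) t ∧ DifferentiableAt ℝ (deriv (lamK μ₁ δ)) t) ∧
    (∀ t : ℝ, 0 < t →
      (1 + t) ^ 2 * deriv (deriv (lamK μ₁ δ)) t - μ₁ * (1 + t) * deriv (lamK μ₁ δ) t
        + (μ₁ + μ₂sq - (1 + t) ^ 2) * lamK μ₁ δ t = 0) ∧
    lamK μ₁ δ 0 = besselK (Real.sqrt δ / 2) 1 ∧
    Tendsto (lamK μ₁ δ) atTop (nhds 0) := by
  set ν := √δ / 2
  set h : ℝ → ℝ := fun s => s ^ ((μ₁ + 1) / 2) * besselK ν s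
  have hg s (hs : 0 < s) := hasDerivAt_besselK ν hs
  have hg' s (hs : 0 < s) := hasDerivAt_besselKDeriv 1 ν hs
  have hlam : lamK μ₁ δ = fun t => h (1 + t) := rfl
  have hderiv : deriv (lamK μ₁ δ) = fun t => deriv h (1 + t) :=
    funext fun t => deriv_comp_const_add h 1 t
  have hν : ν ^ 2 = δ / 4 := by rw [div_pow, sq_sqrt hδ]; norm_num
  refine ⟨fun t ht => ⟨?_, ?_⟩, fun t ht => ?_, by simp [lamK, ν], ?_⟩
  · exact ((hasDerivAt_rpow_mul (by linarith) (hg _ (by linarith))).comp_const_add 1 t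
      ).differentiableAt
  · rw [hderiv]
    exact ((hasDerivAt_deriv_rpow_mul hg hg' (by linarith)).comp_const_add 1 t).differentiableAt
  · have := rpow_mul_ode_of_bessel_ode hg hg' (fun s hs => besselK_ode ν hs)
      (a := (μ₁ + 1) / 2) (by linarith : 0 < 1 + t)
    rw [hderiv, deriv_comp_const_add, hlam]
    linear_combination this
      + (1 + t) ^ ((μ₁ + 1) / 2) * besselK ν (1 + t) * (hν + hδdef / 4)
  · exact (tendsto_rpow_mul_besselK_atTop ν _).comp (tendsto_atTop_add_const_left _ 1 tendsto_id)

/-- equation (2.4): `λ(t) = (1+t)^{(μ₁+1)/2} K_{√δ/2}(1+t)` is twice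
differentiable on `(0,∞)` and satisfies
`(1+t)² λ'' − μ₁(1+t) λ' + (μ₁ + μ₂² − (1+t)²) λ = 0` for `t > 0`;
moreover `λ(0) = K_{√δ/2}(1)` and `λ(t) → 0` as `t → ∞`. -/
theorem lamK_ode
    (μ₁ μ₂sq : ℝ) (hμ₁ : 0 ≤ μ₁) (hμ₂ : 0 ≤ μ₂sq)
    (δ : ℝ) (hδdef : δ = (μ₁ - 1) ^ 2 - 4 * μ₂sq) (hδ : 0 ≤ δ) :
    (∀ t : ℝ, 0 < t →
      DifferentiableAt ℝ (lamK μ₁ δ) t ∧ DifferentiableAt ℝ (deriv (lamK μ₁ δ)) t) ∧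
    (∀ t : ℝ, 0 < t →
      (1 + t) ^ 2 * deriv (deriv (lamK μ₁ δ)) t - μ₁ * (1 + t) * deriv (lamK μ₁ δ) t
        + (μ₁ + μ₂sq - (1 + t) ^ 2) * lamK μ₁ δ t = 0) ∧
    lamK μ₁ δ 0 = besselK (Real.sqrt δ / 2) 1 ∧
    Tendsto (lamK μ₁ δ) atTop (nhds 0) :=
  lamK_ode_general μ₁ μ₂sq δ hδdef hδ

end
end

section
/- Let G : [0,∞) → [0,∞) be continuous, and define H(t) := ∫₀ᵗ (t−s)(1+s) G(s) ds and J(t) := ∫₀ᵗ (2+s)^{−3} H(s) ds. Then for all t ≥ 0: (1+t)² J(t) ≤ (1/2) ∫₀ᵗ (t−s)² G(s) ds. -/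
/-!
Exchanging the order of integration, `J(t) = ∫₀ᵗ (1 + s) G(s) K(t, s) ds` with the kernel
`K(t, s) = ∫ₛᵗ (r - s) (2 + r)⁻³ dr = (t - s)² / (2 (2 + s) (2 + t)²)` (`weightKernel`).
We obtain this by integrating `J(t) = ∫₀ᵗ H ∂ₛ²K` by parts twice: the boundary terms vanish
since `H(0) = H'(0) = 0` and `K(t, t) = ∂ₛK(t, t) = 0`. The claim is then the pointwise bound
`(1 + t)² (1 + s) ≤ (2 + t)² (2 + s)`.
-/

open MeasureTheory Set

noncomputable section

theorem hasDerivAt_integral_sub_mul {g : ℝ → ℝ} (hg : Continuous g) (a s : ℝ) :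
    HasDerivAt (fun s => ∫ σ in a..s, (s - σ) * g σ) (∫ σ in a..s, g σ) s := by
  have hσg : Continuous fun σ => σ * g σ := continuous_id.mul hg
  have hsplit : (fun s => ∫ σ in a..s, (s - σ) * g σ)
      = fun s => s * (∫ σ in a..s, g σ) - ∫ σ in a..s, σ * g σ := by
    funext s
    simp only [sub_mul]
    rw [intervalIntegral.integral_sub (f := fun σ => s * g σ)
      ((continuous_const.mul hg).intervalIntegrable _ _) (hσg.intervalIntegrable _ _),
      intervalIntegral.integral_const_mul]
  rw [hsplit]
  refine (((hasDerivAt_id' s).mul (hg.integral_hasStrictDerivAt a s).hasDerivAt).sub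
    (hσg.integral_hasStrictDerivAt a s).hasDerivAt).congr_deriv ?_
  ring

theorem integral_mul_deriv_deriv_eq_deriv_deriv_mul {a b : ℝ} {u u' u'' v v' v'' : ℝ → ℝ}
    (hu : ∀ x ∈ uIcc a b, HasDerivAt u (u' x) x)
    (hu' : ∀ x ∈ uIcc a b, HasDerivAt u' (u'' x) x)
    (hv : ∀ x ∈ uIcc a b, HasDerivAt v (v' x) x)
    (hv' : ∀ x ∈ uIcc a b, HasDerivAt v' (v'' x) x)
    (hu'' : IntervalIntegrable u'' volume a b) (hv'' : IntervalIntegrable v'' volume a b) :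
    ∫ x in a..b, u x * v'' x
      = u b * v' b - u a * v' a - (u' b * v b - u' a * v a) + ∫ x in a..b, u'' x * v x := by
  have hcont : ∀ {f f' : ℝ → ℝ}, (∀ x ∈ uIcc a b, HasDerivAt f (f' x) x) →
      IntervalIntegrable f volume a b := fun hf =>
    ContinuousOn.intervalIntegrable fun x hx => (hf x hx).continuousAt.continuousWithinAt
  rw [intervalIntegral.integral_mul_deriv_eq_deriv_mul hu hv' (hcont hu') hv'',
    intervalIntegral.integral_mul_deriv_eq_deriv_mul hu' hv hu'' (hcont hv')]
  ring

def weightKernel (t s : ℝ) : ℝ := (t - s) ^ 2 / (2 * (2 + s) * (2 + t) ^ 2)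

theorem hasDerivAt_weightKernel {t s : ℝ} (ht : 2 + t ≠ 0) (hs : 2 + s ≠ 0) :
    HasDerivAt (weightKernel t) ((((2 + t) ^ 2)⁻¹ - ((2 + s) ^ 2)⁻¹) / 2) s := by
  refine ((((hasDerivAt_id' s).const_sub t).pow 2).div
    (((hasDerivAt_id' s).const_add 2).const_mul 2 |>.mul_const ((2 + t) ^ 2))
    (by positivity)).congr_deriv ?_
  simp only [Pi.pow_apply]
  field_simp
  ring

theorem hasDerivAt_deriv_weightKernel (t : ℝ) {s : ℝ} (hs : 2 + s ≠ 0) :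
    HasDerivAt (fun s => (((2 + t) ^ 2)⁻¹ - ((2 + s) ^ 2)⁻¹) / 2) ((2 + s) ^ (-(3 : ℤ))) s := by
  refine (((hasDerivAt_const s ((2 + t) ^ 2)⁻¹).sub
    ((((hasDerivAt_id' s).const_add 2).pow 2).inv (pow_ne_zero 2 hs))).div_const 2).congr_deriv
    ?_
  simp only [Pi.pow_apply, zpow_neg, zpow_ofNat]
  field_simp
  ring

theorem sq_one_add_mul_weightKernel_le {t s : ℝ} (ht : 0 ≤ t) (hs : 0 ≤ s) :
    (1 + t) ^ 2 * ((1 + s) * weightKernel t s) ≤ (t - s) ^ 2 / 2 := by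
  have hle : (1 + t) ^ 2 * (1 + s) ≤ (2 + s) * (2 + t) ^ 2 := by
    have := pow_le_pow_left₀ (by linarith) (by linarith : 1 + t ≤ 2 + t) 2
    nlinarith [mul_le_mul this (by linarith : 1 + s ≤ 2 + s) (by linarith) (by positivity)]
  rw [weightKernel, ← mul_assoc, mul_div_assoc', div_le_div_iff₀ (by positivity) two_pos]
  nlinarith [mul_le_mul_of_nonneg_left hle (sq_nonneg (t - s))]

theorem integral_mul_integral_sub_mul_eq_integral_mul_weightKernel {g : ℝ → ℝ}
    (hg : Continuous g) {t : ℝ} (ht : 0 ≤ t) :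
    ∫ s in (0:ℝ)..t, (2 + s) ^ (-(3:ℤ)) * ∫ σ in (0:ℝ)..s, (s - σ) * g σ
      = ∫ s in (0:ℝ)..t, g s * weightKernel t s := by
  have h2 : ∀ s ∈ uIcc 0 t, 2 + s ≠ 0 := fun s hs => by
    rw [uIcc_of_le ht] at hs
    linarith [hs.1]
  simp_rw [mul_comm ((2 + _ : ℝ) ^ (-(3:ℤ)))]
  rw [integral_mul_deriv_deriv_eq_deriv_deriv_mul
    (fun s _ => hasDerivAt_integral_sub_mul hg 0 s)
    (fun s _ => (hg.integral_hasStrictDerivAt 0 s).hasDerivAt)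
    (fun s hs => hasDerivAt_weightKernel (h2 t right_mem_uIcc) (h2 s hs))
    (fun s hs => hasDerivAt_deriv_weightKernel t (h2 s hs)) (hg.intervalIntegrable 0 t)
    (ContinuousOn.intervalIntegrable fun s hs =>
      ((continuous_const.add continuous_id).continuousAt.zpow₀ _
        (Or.inl (h2 s hs))).continuousWithinAt)]
  simp [weightKernel]

theorem sq_one_add_mul_integral_mul_weightKernel_le {G : ℝ → ℝ} (hGc : Continuous G)
    (hGpos : ∀ s, 0 ≤ G s) {t : ℝ} (ht : 0 ≤ t) :
    (1 + t) ^ 2 * ∫ s in (0:ℝ)..t, (1 + s) * G s * weightKernel t s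
      ≤ 1 / 2 * ∫ s in (0:ℝ)..t, (t - s) ^ 2 * G s := by
  rw [← intervalIntegral.integral_const_mul, ← intervalIntegral.integral_const_mul]
  refine intervalIntegral.integral_mono_on ht ?_ ?_ fun s hs => ?_
  · refine ContinuousOn.intervalIntegrable fun s hs => ?_
    rw [uIcc_of_le ht] at hs
    have hK := hasDerivAt_weightKernel (t := t) (s := s) (by linarith) (by linarith [hs.1])
    have hg : Continuous fun s => (1 + s) * G s := by fun_prop
    exact (continuousAt_const.mul (hg.continuousAt.mul hK.continuousAt)).continuousWithinAt
  · exact (continuous_const.mul (by fun_prop)).intervalIntegrable _ _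
  · calc (1 + t) ^ 2 * ((1 + s) * G s * weightKernel t s)
        = (1 + t) ^ 2 * ((1 + s) * weightKernel t s) * G s := by ring
      _ ≤ (t - s) ^ 2 / 2 * G s :=
        mul_le_mul_of_nonneg_right (sq_one_add_mul_weightKernel_le ht hs.1) (hGpos s)
      _ = 1 / 2 * ((t - s) ^ 2 * G s) := by ring

/-- Lemma 4.4: for continuous nonnegative `G` with
`H(t) = ∫₀ᵗ (t−s)(1+s)G(s) ds` and `J(t) = ∫₀ᵗ (2+s)^{−3} H(s) ds`, one has
`(1+t)² J(t) ≤ (1/2) ∫₀ᵗ (t−s)² G(s) ds` for all `t ≥ 0`. -/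
theorem J_le_quadratic_average
    (G : ℝ → ℝ) (hGc : Continuous G) (hGpos : ∀ t, 0 ≤ G t)
    (H J : ℝ → ℝ)
    (hH : H = fun t => ∫ s in (0:ℝ)..t, (t - s) * (1 + s) * G s)
    (hJ : J = fun t => ∫ s in (0:ℝ)..t, (2 + s) ^ (-(3:ℤ)) * H s) :
    ∀ t : ℝ, 0 ≤ t →
      (1 + t) ^ 2 * J t ≤ (1 / 2) * ∫ s in (0:ℝ)..t, (t - s) ^ 2 * G s := by
  intro t ht
  have hJt : J t = ∫ s in (0:ℝ)..t, (1 + s) * G s * weightKernel t s := by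
    simpa only [hJ, hH, mul_assoc] using
      integral_mul_integral_sub_mul_eq_integral_mul_weightKernel
      (by fun_prop : Continuous fun s => (1 + s) * G s) ht
  rw [hJt]
  exact sq_one_add_mul_integral_mul_weightKernel_le hGc hGpos ht
end
end
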